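/- arXiv:1109.3430 — 2 statements merged into one kernel-verified Lean document; each statement's English description precedes it below -/
import Mathlib

section
/- Let ν be a probability distribution on ℝᵈ with mean zero, identity covariance, finite moment generating function ψ_ν(y) = ∫ exp(⟨x,y⟩) dν(x) for all y ∈ ℝᵈ, and satisfying sup_{n∈ℕ} sup_{y∈K} ψ_ν(y/√n)ⁿ < ∞ for every compact K ⊂ ℝᵈ. Let (F_k)_{k=0}^n be a filtration, Y_1,…,Y_n i.i.d. with law ν such that Y_i is F_i-measurable and independent of F_{i−1}, and let γ_i be F_{i−1}-measurable random d×d matrices taking values in a fixed compact set of matrices. Define M_0 = 0 and M_k = n^{−1/2} Σ_{i=1}^k γ_i Y_i. Then for every A > 0 there exists a constant C depending only on A, ν, and the compact set of matrices (but not on n or the choice of γ_i) such that E[ exp( A max_{0≤k≤n} ‖M_k‖ ) ] ≤ C. -/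
open MeasureTheory ProbabilityTheory Finset
open scoped NNReal ENNReal

set_option maxHeartbeats 1000000

section Aux

variable {d : ℕ}



lemma coord_integrable {d : ℕ} (ν : Measure (Fin d → ℝ)) [IsProbabilityMeasure ν] (hmgf : ∀ y : Fin d → ℝ, Integrable (fun x => Real.exp (∑ i, x i * y i)) ν)
    (z : Fin d → ℝ) : Integrable (fun x => ∑ i, x i * z i) ν := by
  refine Integrable.mono' ((hmgf z).add (hmgf (-z))) ?_ ?_
  · refine (Finset.aestronglyMeasurable_fun_sum _ fun i _ => ?_)
    exact ((measurable_pi_apply i).mul_const _).aestronglyMeasurable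
  · refine Filter.Eventually.of_forall fun x => ?_
    have h1 : ∑ i, x i * (-z) i = -(∑ i, x i * z i) := by
      simp [mul_neg]
    simp only [Pi.add_apply]
    rw [Real.norm_eq_abs, abs_le]
    have h2 := Real.add_one_le_exp (∑ i, x i * (-z) i)
    rw [h1] at h2
    have h3 := Real.add_one_le_exp (∑ i, x i * z i)
    have h4 := Real.exp_nonneg (∑ i, x i * z i)
    have h5 := Real.exp_nonneg (∑ i, x i * (-z) i)
    rw [h1] at h5
    rw [h1]
    constructor
    · nlinarith
    · nlinarith

lemma psi_ge_one {d : ℕ} (ν : Measure (Fin d → ℝ)) [IsProbabilityMeasure ν] (hmean : ∀ i : Fin d, ∫ x, x i ∂ν = 0)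
    (hmgf : ∀ y : Fin d → ℝ, Integrable (fun x => Real.exp (∑ i, x i * y i)) ν)
    (z : Fin d → ℝ) : 1 ≤ ∫ x, Real.exp (∑ i, x i * z i) ∂ν := by
  have hint : Integrable (fun x => ∑ i, x i * z i) ν := coord_integrable ν hmgf z
  have hintc : ∀ i : Fin d, Integrable (fun x : Fin d → ℝ => x i) ν := by
    intro i
    have := coord_integrable ν hmgf (Pi.single i 1)
    refine this.congr (Filter.Eventually.of_forall fun x => ?_)
    simp [Pi.single_apply, mul_ite, Finset.sum_ite_eq']
  have h1 : ∫ x, (1 + ∑ i, x i * z i) ∂ν = 1 := by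
    rw [integral_add (integrable_const 1) hint, integral_const]
    have : ∫ x, ∑ i, x i * z i ∂ν = ∑ i : Fin d, ∫ x, x i * z i ∂ν :=
      integral_finset_sum _ fun i _ => (hintc i).mul_const _
    simp [this, integral_mul_const, hmean]
  calc (1 : ℝ) = ∫ x, (1 + ∑ i, x i * z i) ∂ν := h1.symm
    _ ≤ ∫ x, Real.exp (∑ i, x i * z i) ∂ν := by
        refine integral_mono ((integrable_const 1).add hint) (hmgf z) fun x => ?_
        exact Real.add_one_le_exp _ |>.trans_eq' (by ring)




lemma psi_measurable (ν : Measure (Fin d → ℝ)) [IsProbabilityMeasure ν] :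
    Measurable (fun z : Fin d → ℝ => ∫ x, Real.exp (∑ i, x i * z i) ∂ν) := by
  have hcont : Continuous (fun p : (Fin d → ℝ) × (Fin d → ℝ) => Real.exp (∑ i, p.2 i * p.1 i)) := by
    fun_prop
  exact (hcont.stronglyMeasurable.integral_prod_right').measurable

lemma freeze {Ω : Type} {m : MeasurableSpace Ω} [m0 : MeasurableSpace Ω] (μ : Measure Ω)
    [IsProbabilityMeasure μ] (hm : m ≤ m0)
    (ν : Measure (Fin d → ℝ)) [IsProbabilityMeasure ν]
    (hmgf : ∀ y : Fin d → ℝ, Integrable (fun x => Real.exp (∑ i, x i * y i)) ν)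
    (Y : Ω → Fin d → ℝ) (hY : Measurable Y) (hmap : Measure.map Y μ = ν)
    (hind : Indep (MeasurableSpace.comap Y inferInstance) m μ)
    (V : Ω → ℝ) (hV : StronglyMeasurable[m] V) (hVint : Integrable V μ)
    (c : Ω → Fin d → ℝ) (hc : Measurable[m] c)
    (B : ℝ) (hB : ∀ ω, (∫ x, Real.exp (∑ j, x j * c ω j) ∂ν) ≤ B) :
    Integrable (fun ω => V ω * Real.exp (∑ j, Y ω j * c ω j)) μ ∧
    ∫ ω, V ω * Real.exp (∑ j, Y ω j * c ω j) ∂μ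
      = ∫ ω, V ω * ∫ x, Real.exp (∑ j, x j * c ω j) ∂ν ∂μ := by
  set ψ := fun z : Fin d → ℝ => ∫ x, Real.exp (∑ i, x i * z i) ∂ν with hψ
  have hψm : Measurable ψ := psi_measurable ν
  set W : Ω → ℝ × (Fin d → ℝ) := fun ω => (V ω, c ω) with hW
  have hWm : Measurable[m] W := (hV.measurable).prodMk hc
  have hWm0 : Measurable W := hWm.mono hm le_rfl
  have hindWY : ProbabilityTheory.IndepFun W Y μ := by
    have h1 : Indep (MeasurableSpace.comap Y inferInstance) (MeasurableSpace.comap W inferInstance) μ :=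
      indep_of_indep_of_le_right hind hWm.comap_le
    exact h1.symm
  set H : (ℝ × (Fin d → ℝ)) × (Fin d → ℝ) → ℝ :=
    fun q => q.1.1 * Real.exp (∑ j, q.2 j * q.1.2 j) with hH
  have hHcont : Continuous H := by fun_prop
  set ρ : Measure (ℝ × (Fin d → ℝ)) := μ.map W with hρ
  have hρprob : IsProbabilityMeasure ρ := Measure.isProbabilityMeasure_map hWm0.aemeasurable
  have hprod : μ.map (fun ω => (W ω, Y ω)) = ρ.prod ν := by
    rw [← hmap]
    exact (indepFun_iff_map_prod_eq_prod_map_map hWm0.aemeasurable hY.aemeasurable).mp hindWY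
  -- integrability of H on the product
  have hHmeas : AEStronglyMeasurable H (ρ.prod ν) := hHcont.aestronglyMeasurable
  have haeB : ∀ᵐ w ∂ρ, ψ w.2 ≤ B := by
    rw [hρ]
    refine (ae_map_iff hWm0.aemeasurable
      (measurableSet_le (hψm.comp measurable_snd) measurable_const)).mpr ?_
    exact Filter.Eventually.of_forall fun ω => hB ω
  have hfst : Integrable (fun w : ℝ × (Fin d → ℝ) => w.1) ρ := by
    rw [hρ]
    rw [integrable_map_measure measurable_fst.aestronglyMeasurable hWm0.aemeasurable]
    exact hVint
  have hHint : Integrable H (ρ.prod ν) := by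
    rw [integrable_prod_iff hHmeas]
    constructor
    · refine Filter.Eventually.of_forall fun w => ?_
      exact (hmgf w.2).const_mul w.1
    · have heq : ∀ w : ℝ × (Fin d → ℝ), ∫ y, ‖H (w, y)‖ ∂ν = |w.1| * ψ w.2 := by
        intro w
        rw [hψ]
        simp only [hH, Real.norm_eq_abs, abs_mul, Real.abs_exp]
        rw [integral_const_mul]
      refine Integrable.mono' (g := fun w => |w.1| * B) ((hfst.abs).mul_const B) ?_ ?_
      · refine AEStronglyMeasurable.congr ?_ (Filter.Eventually.of_forall fun w => (heq w).symm)
        exact ((measurable_fst.abs).mul (hψm.comp measurable_snd)).aestronglyMeasurable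
      · filter_upwards [haeB] with w hw
        rw [heq w, Real.norm_eq_abs, abs_mul, abs_abs]
        have hψnn : 0 ≤ ψ w.2 := integral_nonneg fun x => (Real.exp_pos _).le
        rw [abs_of_nonneg hψnn]
        exact mul_le_mul_of_nonneg_left hw (abs_nonneg _)
  have hpairm : AEMeasurable (fun ω => (W ω, Y ω)) μ := (hWm0.prodMk hY).aemeasurable
  have hint1 : Integrable (fun ω => V ω * Real.exp (∑ j, Y ω j * c ω j)) μ := by
    have hHint' : Integrable H (Measure.map (fun ω => (W ω, Y ω)) μ) := by
      rw [hprod]; exact hHint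
    exact hHint'.comp_aemeasurable hpairm
  refine ⟨hint1, ?_⟩
  have h2 : ∫ ω, V ω * Real.exp (∑ j, Y ω j * c ω j) ∂μ = ∫ q, H q ∂(ρ.prod ν) := by
    rw [← hprod, integral_map hpairm (by rw [hprod]; exact hHmeas)]
  rw [h2, integral_prod _ hHint]
  have h3 : ∀ w : ℝ × (Fin d → ℝ), ∫ y, H (w, y) ∂ν = w.1 * ψ w.2 := by
    intro w
    simp only [hH, hψ]
    rw [integral_const_mul]
  calc ∫ w, ∫ y, H (w, y) ∂ν ∂ρ = ∫ w, w.1 * ψ w.2 ∂ρ := by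
        exact integral_congr_ae (Filter.Eventually.of_forall h3)
    _ = ∫ ω, V ω * ψ (c ω) ∂μ := by
        rw [hρ, integral_map hWm0.aemeasurable]
        exact ((measurable_fst.mul (hψm.comp measurable_snd))).aestronglyMeasurable

lemma freeze_condexp {Ω : Type} {m : MeasurableSpace Ω} [m0 : MeasurableSpace Ω] (μ : Measure Ω)
    [IsProbabilityMeasure μ] (hm : m ≤ m0)
    (ν : Measure (Fin d → ℝ)) [IsProbabilityMeasure ν]
    (hmgf : ∀ y : Fin d → ℝ, Integrable (fun x => Real.exp (∑ i, x i * y i)) ν)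
    (Y : Ω → Fin d → ℝ) (hY : Measurable Y) (hmap : Measure.map Y μ = ν)
    (hind : Indep (MeasurableSpace.comap Y inferInstance) m μ)
    (V : Ω → ℝ) (hV : StronglyMeasurable[m] V) (hVint : Integrable V μ)
    (c : Ω → Fin d → ℝ) (hc : Measurable[m] c)
    (B : ℝ) (hB : ∀ ω, (∫ x, Real.exp (∑ j, x j * c ω j) ∂ν) ≤ B) :
    (fun ω => V ω * ∫ x, Real.exp (∑ j, x j * c ω j) ∂ν) =ᵐ[μ]
      μ[fun ω => V ω * Real.exp (∑ j, Y ω j * c ω j) | m] := by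
  have hψm : Measurable (fun z : Fin d → ℝ => ∫ x, Real.exp (∑ i, x i * z i) ∂ν) :=
    psi_measurable ν
  haveI : Nonempty Ω := MeasureTheory.Measure.nonempty_of_neZero μ
  have hB0 : 0 ≤ B := le_trans (integral_nonneg fun x => (Real.exp_pos _).le)
    (hB (Classical.arbitrary _))
  haveI : SigmaFinite (μ.trim hm) := by
    have : IsFiniteMeasure (μ.trim hm) := isFiniteMeasure_trim hm
    infer_instance
  have hgint : Integrable (fun ω => V ω * ∫ x, Real.exp (∑ j, x j * c ω j) ∂ν) μ := by
    refine Integrable.mono' (hVint.norm.mul_const B) ?_ ?_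
    · exact ((hV.measurable.mono hm le_rfl).mul
        ((hψm.comp (hc.mono hm le_rfl)))).aestronglyMeasurable
    · refine Filter.Eventually.of_forall fun ω => ?_
      rw [Real.norm_eq_abs, abs_mul,
        abs_of_nonneg (integral_nonneg fun x => (Real.exp_pos _).le)]
      exact mul_le_mul_of_nonneg_left (hB ω) (abs_nonneg _) |>.trans_eq (by rw [Real.norm_eq_abs])
  refine ae_eq_condExp_of_forall_setIntegral_eq hm
    (freeze μ hm ν hmgf Y hY hmap hind V hV hVint c hc B hB).1
    (fun s _ _ => hgint.integrableOn) (fun s hs _ => ?_) ?_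
  · -- set integral identity
    have hind' : StronglyMeasurable[m] (s.indicator V) := hV.indicator hs
    have hindint : Integrable (s.indicator V) μ := hVint.indicator (hm s hs)
    have hfr := (freeze μ hm ν hmgf Y hY hmap hind (s.indicator V) hind' hindint c hc B hB).2
    rw [← integral_indicator (hm s hs), ← integral_indicator (hm s hs)]
    have e1 : s.indicator (fun ω => V ω * Real.exp (∑ j, Y ω j * c ω j))
        = fun ω => s.indicator V ω * Real.exp (∑ j, Y ω j * c ω j) := by
      ext ω; by_cases hω : ω ∈ s <;> simp [Set.indicator_of_mem, Set.indicator_of_notMem, hω]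
    have e2 : s.indicator (fun ω => V ω * ∫ x, Real.exp (∑ j, x j * c ω j) ∂ν)
        = fun ω => s.indicator V ω * ∫ x, Real.exp (∑ j, x j * c ω j) ∂ν := by
      ext ω; by_cases hω : ω ∈ s <;> simp [Set.indicator_of_mem, Set.indicator_of_notMem, hω]
    rw [e1, e2, hfr]
  · refine StronglyMeasurable.aestronglyMeasurable ?_
    exact (hV.measurable.mul (hψm.comp hc)).stronglyMeasurable

lemma key_submartingale (ν : Measure (Fin d → ℝ)) [IsProbabilityMeasure ν]
    (hmean : ∀ i : Fin d, ∫ x, x i ∂ν = 0)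
    (hmgf : ∀ y : Fin d → ℝ, Integrable (fun x => Real.exp (∑ i, x i * y i)) ν)
    {Ω : Type} [m0 : MeasurableSpace Ω] (μ : Measure Ω) [IsProbabilityMeasure μ]
    (ℱ : Filtration ℕ m0) (Y : ℕ → Ω → Fin d → ℝ)
    (hYm : ∀ i, Measurable (Y i)) (hYmap : ∀ i, Measure.map (Y i) μ = ν)
    (hYadp : ∀ i, 1 ≤ i → Measurable[ℱ i] (Y i))
    (hYind : ∀ i, 1 ≤ i → Indep (MeasurableSpace.comap (Y i) inferInstance) (ℱ (i-1)) μ)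
    (γ : ℕ → Ω → Fin d → Fin d → ℝ) (hγm : ∀ i, 1 ≤ i → Measurable[ℱ (i-1)] (γ i))
    (n : ℕ)
    (M : ℕ → Ω → Fin d → ℝ)
    (hM : ∀ k ω, M k ω = ∑ i ∈ Finset.Icc 1 k,
      ((n : ℝ) ^ (-(1 : ℝ) / 2)) • fun l => ∑ m, γ i ω l m * Y i ω m)
    (a : ℝ) (l : Fin d) (B : ℝ) (hB1 : 1 ≤ B)
    (hψB : ∀ k ω, ∫ x, Real.exp (∑ j, x j *
        (a * ((n : ℝ) ^ (-(1 : ℝ) / 2)) * γ (k + 1) ω l j)) ∂ν ≤ B) :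
    Submartingale (fun k ω => Real.exp (a * M k ω l)) ℱ μ ∧
    ∀ k, ∫ ω, Real.exp (a * M k ω l) ∂μ ≤ B ^ k := by
  set c : ℕ → Ω → Fin d → ℝ :=
    fun k ω j => a * ((n : ℝ) ^ (-(1 : ℝ) / 2)) * γ (k + 1) ω l j with hc
  -- pointwise formula for the coordinate
  have hMl : ∀ k, (fun ω => M k ω l)
      = fun ω => ∑ i ∈ Finset.Icc 1 k, (n : ℝ) ^ (-(1 : ℝ) / 2) * ∑ m, γ i ω l m * Y i ω m := by
    intro k; funext ω
    rw [hM k ω]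
    simp [Finset.sum_apply]
  -- measurability of the coordinate w.r.t. ℱ k
  have hMme : ∀ k, Measurable[ℱ k] fun ω => M k ω l := by
    intro k
    rw [hMl k]
    refine Finset.measurable_sum _ fun i hi => ?_
    rw [Finset.mem_Icc] at hi
    refine Measurable.const_mul ?_ _
    refine Finset.measurable_sum _ fun m _ => Measurable.mul ?_ ?_
    · have hγ : Measurable[ℱ (i - 1)] (γ i) := hγm i hi.1
      have hγ' : Measurable[ℱ k] (γ i) := hγ.mono (ℱ.mono (by omega)) le_rfl
      exact (measurable_pi_apply m).comp ((measurable_pi_apply l).comp hγ')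
    · have hYi : Measurable[ℱ i] (Y i) := hYadp i hi.1
      have hYi' : Measurable[ℱ k] (Y i) := hYi.mono (ℱ.mono hi.2) le_rfl
      exact (measurable_pi_apply m).comp hYi'
  have hfm : ∀ k, Measurable[ℱ k] fun ω => Real.exp (a * M k ω l) :=
    fun k => (Real.measurable_exp.comp ((hMme k).const_mul a))
  -- one-step multiplicative decomposition
  have hstep : ∀ k, (fun ω => Real.exp (a * M (k + 1) ω l))
      = fun ω => Real.exp (a * M k ω l) * Real.exp (∑ j, Y (k + 1) ω j * c k ω j) := by
    intro k; funext ω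
    rw [← Real.exp_add]
    congr 1
    have h1 : M (k + 1) ω l = M k ω l
        + (n : ℝ) ^ (-(1 : ℝ) / 2) * ∑ m, γ (k + 1) ω l m * Y (k + 1) ω m := by
      have := congrFun (congrArg (fun g => g) (hM (k + 1) ω)) l
      rw [congrFun (hM (k + 1) ω) l, congrFun (hM k ω) l,
        Finset.sum_Icc_succ_top (Nat.succ_le_succ (Nat.zero_le k))]
      simp [Finset.sum_apply]
    rw [h1, mul_add]
    congr 1
    simp only [hc]
    rw [← mul_assoc, Finset.mul_sum]
    exact Finset.sum_congr rfl fun m _ => by ring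
  -- c is predictable
  have hcm : ∀ k, Measurable[ℱ k] (c k) := by
    intro k
    have hγ : Measurable[ℱ ((k + 1) - 1)] (γ (k + 1)) := hγm (k + 1) (Nat.succ_le_succ k.zero_le)
    change Measurable[ℱ k] (γ (k + 1)) at hγ
    have hout : Measurable (fun v : Fin d → ℝ => fun j => a * ((n : ℝ) ^ (-(1 : ℝ) / 2)) * v j) := by
      fun_prop
    exact hout.comp ((measurable_pi_apply l).comp hγ)
  have hind' : ∀ k, Indep (MeasurableSpace.comap (Y (k + 1)) inferInstance) (ℱ k) μ := by
    intro k
    have := hYind (k + 1) (Nat.succ_le_succ k.zero_le)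
    simpa using this
  have hψBk : ∀ k (ω : Ω), ∫ x, Real.exp (∑ j, x j * c k ω j) ∂ν ≤ B := fun k ω => hψB k ω
  -- integrability and moment bound by induction
  have hint : ∀ k, Integrable (fun ω => Real.exp (a * M k ω l)) μ ∧
      ∫ ω, Real.exp (a * M k ω l) ∂μ ≤ B ^ k := by
    intro k
    induction k with
    | zero =>
      have h0 : (fun ω => Real.exp (a * M 0 ω l)) = fun _ => (1 : ℝ) := by
        funext ω
        rw [congrFun (hMl 0) ω]
        simp
      rw [h0]
      simp
    | succ k ih =>
      have hfr := freeze μ (ℱ.le k) ν hmgf (Y (k + 1)) (hYm (k + 1)) (hYmap (k + 1)) (hind' k)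
        (fun ω => Real.exp (a * M k ω l)) (hfm k).stronglyMeasurable ih.1 (c k) (hcm k) B (hψBk k)
      constructor
      · rw [hstep k]; exact hfr.1
      · rw [hstep k]
        rw [hfr.2]
        have hmono : ∫ ω, Real.exp (a * M k ω l) * (∫ x, Real.exp (∑ j, x j * c k ω j) ∂ν) ∂μ
            ≤ ∫ ω, Real.exp (a * M k ω l) * B ∂μ := by
          refine integral_mono ?_ (ih.1.mul_const B) ?_
          · -- integrability of f k * ψ(c k)
            refine Integrable.mono' (ih.1.norm.mul_const B) ?_ ?_
            · exact (((hfm k).mono (ℱ.le k) le_rfl).mul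
                ((psi_measurable ν).comp ((hcm k).mono (ℱ.le k) le_rfl))).aestronglyMeasurable
            · refine Filter.Eventually.of_forall fun ω => ?_
              rw [Real.norm_eq_abs, Real.norm_eq_abs, abs_mul,
                abs_of_nonneg (integral_nonneg fun x => (Real.exp_pos _).le)]
              exact mul_le_mul_of_nonneg_left (hψBk k ω) (abs_nonneg _)
          · intro ω
            exact mul_le_mul_of_nonneg_left (hψBk k ω) (Real.exp_pos _).le
        refine hmono.trans ?_
        rw [integral_mul_const]
        calc (∫ ω, Real.exp (a * M k ω l) ∂μ) * B ≤ B ^ k * B :=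
              mul_le_mul_of_nonneg_right ih.2 (by linarith)
          _ = B ^ (k + 1) := by ring
  refine ⟨?_, fun k => (hint k).2⟩
  refine submartingale_nat (fun k => (hfm k).stronglyMeasurable) (fun k => (hint k).1) fun k => ?_
  have hce := freeze_condexp μ (ℱ.le k) ν hmgf (Y (k + 1)) (hYm (k + 1)) (hYmap (k + 1)) (hind' k)
    (fun ω => Real.exp (a * M k ω l)) (hfm k).stronglyMeasurable (hint k).1 (c k) (hcm k) B (hψBk k)
  rw [hstep k]
  filter_upwards [hce] with ω hω
  rw [← hω]
  have h1 : 1 ≤ ∫ x, Real.exp (∑ j, x j * c k ω j) ∂ν := psi_ge_one ν hmean hmgf _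
  nlinarith [Real.exp_pos (a * M k ω l)]



lemma iSup_eq_sup' (n : ℕ) (g : ℕ → ℝ) (hg0 : g 0 = 0) :
    (⨆ k ∈ Finset.range (n + 1), g k)
      = (Finset.range (n + 1)).sup' nonempty_range_add_one g := by
  set T := (Finset.range (n + 1)).sup' nonempty_range_add_one g with hT
  have hT0 : 0 ≤ T := by
    rw [hT]
    refine le_trans (le_of_eq hg0.symm) (Finset.le_sup' g ?_)
    simp
  have hbd : ∀ k, (⨆ _ : k ∈ Finset.range (n + 1), g k) ≤ T := by
    intro k
    by_cases hk : k ∈ Finset.range (n + 1)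
    · rw [ciSup_pos hk]
      exact Finset.le_sup' g hk
    · haveI : IsEmpty (k ∈ Finset.range (n + 1)) := ⟨fun h => hk h⟩
      rw [Real.iSup_of_isEmpty]
      exact hT0
  refine le_antisymm (Real.iSup_le hbd hT0) ?_
  refine Finset.sup'_le _ _ fun k hk => ?_
  have : g k = ⨆ _ : k ∈ Finset.range (n + 1), g k :=
    (ciSup_pos (f := fun _ => g k) hk).symm
  rw [this]
  exact le_ciSup ⟨T, by rintro x ⟨k', rfl⟩; exact hbd k'⟩ k


lemma lintegral_Ioi_inv_sq : ∫⁻ t in Set.Ioi (1:ℝ), (ENNReal.ofReal (t^2))⁻¹ = 1 := by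
  have h1 : ∫⁻ t in Set.Ioi (1:ℝ), (ENNReal.ofReal (t^2))⁻¹
      = ∫⁻ t in Set.Ioi (1:ℝ), ENNReal.ofReal ((t^2)⁻¹) := by
    refine lintegral_congr_ae ?_
    filter_upwards [ae_restrict_mem measurableSet_Ioi] with t ht
    rw [ENNReal.ofReal_inv_of_pos (by nlinarith [Set.mem_Ioi.mp ht])]
  have hint : IntegrableOn (fun t : ℝ => (t^2)⁻¹) (Set.Ioi (1:ℝ)) := by
    have := integrableOn_Ioi_rpow_of_lt (show (-2:ℝ) < -1 by norm_num) (zero_lt_one)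
    refine this.congr_fun (fun t ht => ?_) measurableSet_Ioi
    have ht0 : (0:ℝ) < t := lt_trans zero_lt_one ht
    show t ^ (-2:ℝ) = (t^2)⁻¹
    rw [Real.rpow_neg ht0.le, ← Real.rpow_natCast t 2]
    norm_num
  have h2 : ∫ t in Set.Ioi (1:ℝ), (t^2)⁻¹ = 1 := by
    have := integral_Ioi_rpow_of_lt (show (-2:ℝ) < -1 by norm_num) (zero_lt_one)
    have heq : ∫ t in Set.Ioi (1:ℝ), (t^2)⁻¹ = ∫ t in Set.Ioi (1:ℝ), t ^ (-2:ℝ) := by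
      refine setIntegral_congr_fun measurableSet_Ioi fun t ht => ?_
      have ht0 : (0:ℝ) < t := lt_trans zero_lt_one ht
      rw [Real.rpow_neg ht0.le, ← Real.rpow_natCast t 2]
      norm_num
    rw [heq, this]
    norm_num
  rw [h1, ← ofReal_integral_eq_lintegral_ofReal hint ?_, h2, ENNReal.ofReal_one]
  filter_upwards [ae_restrict_mem measurableSet_Ioi] with t ht
  positivity

end Aux

/-- Uniform exponential moment bound for discrete martingales driven by i.i.d. innovations:
if `ν` has mean zero, identity covariance, everywhere-finite MGF `ψ_ν` with
`sup_n sup_{y∈K} ψ_ν(y/√n)ⁿ < ∞` on compacts, and `M_k = n^{−1/2} ∑_{i≤k} γ_i Y_i` with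
`γ_i` predictable matrices taking values in a fixed compact set `Kmat`, then for every
`A > 0` there is a constant `C` (depending only on `A`, `ν`, `Kmat`, not on `n` or the
`γ_i`) with `E[exp(A max_{0≤k≤n} ‖M_k‖)] ≤ C`. -/
theorem uniform_exp_moment_discrete (d : ℕ) (ν : Measure (Fin d → ℝ))
    [IsProbabilityMeasure ν]
    (hmean : ∀ i : Fin d, ∫ x, x i ∂ν = 0)
    (hcov : ∀ i j : Fin d, ∫ x, x i * x j ∂ν = if i = j then 1 else 0)
    (hmgf : ∀ y : Fin d → ℝ, Integrable (fun x => Real.exp (∑ i, x i * y i)) ν)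
    (hmgfunif : ∀ K : Set (Fin d → ℝ), IsCompact K → ∃ CK : ℝ, ∀ (n : ℕ), 1 ≤ n →
      ∀ y ∈ K, (∫ x, Real.exp (∑ i, x i * (y i / Real.sqrt n)) ∂ν) ^ n ≤ CK)
    (Kmat : Set (Fin d → Fin d → ℝ)) (hKmat : IsCompact Kmat)
    (A : ℝ) (hA : 0 < A) :
    ∃ C : ℝ, ∀ (n : ℕ), 1 ≤ n →
      ∀ (Ω : Type) (m0 : MeasurableSpace Ω) (μ : Measure Ω), IsProbabilityMeasure μ →
      ∀ (ℱ : Filtration ℕ m0) (Y : ℕ → Ω → (Fin d → ℝ)),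
        (∀ i, Measurable (Y i)) →
        (∀ i, Measure.map (Y i) μ = ν) →
        (∀ i, 1 ≤ i → Measurable[ℱ i] (Y i)) →
        (∀ i, 1 ≤ i → Indep (MeasurableSpace.comap (Y i) inferInstance) (ℱ (i - 1)) μ) →
      ∀ (γ : ℕ → Ω → (Fin d → Fin d → ℝ)),
        (∀ i, 1 ≤ i → Measurable[ℱ (i - 1)] (γ i)) →
        (∀ i ω, γ i ω ∈ Kmat) →
      ∀ (M : ℕ → Ω → (Fin d → ℝ)),
        (∀ k ω, M k ω = ∑ i ∈ Finset.Icc 1 k,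
          ((n : ℝ) ^ (-(1 : ℝ) / 2)) • fun l => ∑ m, γ i ω l m * Y i ω m) →
      ∫⁻ ω, ENNReal.ofReal
          (Real.exp (A * ⨆ k ∈ Finset.range (n + 1), ‖M k ω‖)) ∂μ
        ≤ ENNReal.ofReal C := by
  classical
  set KA : Set (Fin d → ℝ) := ⋃ l : Fin d, (fun p : (Fin d → Fin d → ℝ) × ℝ =>
      fun j => 2 * A * p.2 * p.1 l j) '' (Kmat ×ˢ ({-1, 1} : Set ℝ)) with hKA
  have hKAc : IsCompact KA := by
    refine isCompact_iUnion fun l => ?_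
    refine IsCompact.image (hKmat.prod ?_) ?_
    · exact (Set.Finite.insert _ (Set.finite_singleton _)).isCompact
    · fun_prop
  obtain ⟨CK₀, hCK₀⟩ := hmgfunif KA hKAc
  set CK := max CK₀ 1 with hCKdef
  have hCK1 : (1:ℝ) ≤ CK := le_max_right _ _
  refine ⟨1 + 2 * d * CK, ?_⟩
  intro n hn Ω m0 μ hμ ℱ Y hYm hYmap hYadp hYind γ hγm hγK M hM
  have hnpos : (0:ℝ) < n := by exact_mod_cast hn
  have hn0 : (n:ℝ) ≠ 0 := hnpos.ne'
  set B := CK ^ ((n:ℝ)⁻¹) with hBdef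
  have hB1 : 1 ≤ B := by
    have := Real.rpow_le_rpow zero_le_one hCK1 (inv_nonneg.mpr (Nat.cast_nonneg n))
    rwa [Real.one_rpow] at this
  have hBn : B ^ n = CK := by
    rw [hBdef, ← Real.rpow_natCast (CK ^ ((n:ℝ)⁻¹)) n, ← Real.rpow_mul (by linarith),
      inv_mul_cancel₀ hn0, Real.rpow_one]
  -- per-direction submartingale facts
  have hkey : ∀ (l : Fin d) (s : ℝ), s = 1 ∨ s = -1 →
      Submartingale (fun k ω => Real.exp ((2 * A * s) * M k ω l)) ℱ μ ∧
      ∫ ω, Real.exp ((2 * A * s) * M n ω l) ∂μ ≤ CK := by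
    intro l s hs
    have hψB : ∀ (k : ℕ) (ω : Ω), ∫ x, Real.exp (∑ j, x j *
        ((2 * A * s) * ((n : ℝ) ^ (-(1 : ℝ) / 2)) * γ (k + 1) ω l j)) ∂ν ≤ B := by
      intro k ω
      set y : Fin d → ℝ := fun j => 2 * A * s * γ (k + 1) ω l j with hy
      have hyKA : y ∈ KA := by
        rw [hKA]
        refine Set.mem_iUnion.mpr ⟨l, ⟨(γ (k + 1) ω, s),
          ⟨hγK _ _, by rcases hs with h | h <;> simp [h]⟩, rfl⟩⟩
      have hu := hCK₀ n hn y hyKA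
      have hsq : ((n:ℝ) ^ (-(1:ℝ)/2)) = (Real.sqrt n)⁻¹ := by
        rw [neg_div, Real.rpow_neg (Nat.cast_nonneg n), Real.sqrt_eq_rpow]
      have hcy : ∀ j, (2 * A * s) * ((n : ℝ) ^ (-(1 : ℝ) / 2)) * γ (k + 1) ω l j
          = y j / Real.sqrt n := by
        intro j
        simp only [hy]
        rw [hsq, div_eq_mul_inv]
        ring
      simp only [hcy]
      set u := ∫ x, Real.exp (∑ i, x i * (y i / Real.sqrt n)) ∂ν with hudef
      have hu0 : 0 ≤ u := integral_nonneg fun x => (Real.exp_pos _).le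
      have hun : u ^ n ≤ CK := le_trans hu (le_max_left _ _)
      calc u = (u ^ n : ℝ) ^ ((n:ℝ)⁻¹) := by
            rw [← Real.rpow_natCast u n, ← Real.rpow_mul hu0, mul_inv_cancel₀ hn0, Real.rpow_one]
        _ ≤ CK ^ ((n:ℝ)⁻¹) :=
            Real.rpow_le_rpow (pow_nonneg hu0 n) hun (inv_nonneg.mpr (Nat.cast_nonneg n))
        _ = B := hBdef.symm
    have hks := key_submartingale ν hmean hmgf μ ℱ Y hYm hYmap hYadp hYind γ hγm n M hM
      (2 * A * s) l B hB1 hψB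
    exact ⟨hks.1, le_trans (hks.2 n) (le_of_eq hBn)⟩
  -- ambient measurability of M
  have hMcoord : ∀ (k : ℕ) (l : Fin d), Measurable fun ω => M k ω l := by
    intro k l
    have : (fun ω => M k ω l)
        = fun ω => ∑ i ∈ Finset.Icc 1 k, (n : ℝ) ^ (-(1 : ℝ) / 2)
            * ∑ m, γ i ω l m * Y i ω m := by
      funext ω
      rw [hM k ω]
      simp [Finset.sum_apply]
    rw [this]
    refine Finset.measurable_sum _ fun i hi => ?_
    rw [Finset.mem_Icc] at hi
    refine Measurable.const_mul ?_ _
    refine Finset.measurable_sum _ fun m _ => Measurable.mul ?_ ?_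
    · exact (measurable_pi_apply m).comp ((measurable_pi_apply l).comp
        ((hγm i hi.1).mono (ℱ.le (i - 1)) le_rfl))
    · exact (measurable_pi_apply m).comp (hYm i)
  have hMamb : ∀ k, Measurable (M k) := fun k => measurable_pi_lambda _ fun l => hMcoord k l
  -- rewrite the iSup as a finite sup
  have hrw : ∀ ω : Ω, (⨆ k ∈ Finset.range (n + 1), ‖M k ω‖)
      = (Finset.range (n + 1)).sup' nonempty_range_add_one (fun k => ‖M k ω‖) := by
    intro ω
    refine iSup_eq_sup' n _ ?_
    rw [hM 0 ω]
    simp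
  set T : Ω → ℝ := fun ω => (Finset.range (n + 1)).sup' nonempty_range_add_one
    (fun k => ‖M k ω‖) with hTdef
  have hTmeas : Measurable T :=
    Finset.measurable_range_sup'' fun k _ => (hMamb k).norm
  have hgoal : ∫⁻ ω, ENNReal.ofReal
      (Real.exp (A * ⨆ k ∈ Finset.range (n + 1), ‖M k ω‖)) ∂μ
      = ∫⁻ ω, ENNReal.ofReal (Real.exp (A * T ω)) ∂μ := by
    refine lintegral_congr fun ω => ?_
    rw [hrw ω]
  rw [hgoal]
  have hgmeas : Measurable fun ω => Real.exp (A * T ω) :=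
    Real.measurable_exp.comp (hTmeas.const_mul A)
  rw [lintegral_eq_lintegral_meas_le μ (Filter.Eventually.of_forall fun ω => (Real.exp_pos _).le)
    hgmeas.aemeasurable]
  -- maximal inequality consequence
  have hmax : ∀ (l : Fin d) (s : ℝ), s = 1 ∨ s = -1 → ∀ (ε : ℝ≥0), ε ≠ 0 →
      μ {ω | (ε : ℝ) ≤ (Finset.range (n + 1)).sup' nonempty_range_add_one
        fun k => Real.exp ((2 * A * s) * M k ω l)} ≤ ENNReal.ofReal CK / ε := by
    intro l s hs ε hε
    have hnn : (0 : ℕ → Ω → ℝ) ≤ fun k ω => Real.exp ((2 * A * s) * M k ω l) :=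
      fun k => fun ω => (Real.exp_pos _).le
    have h := maximal_ineq (hkey l s hs).1 hnn (ε := ε) n
    have hend : ENNReal.ofReal (∫ ω in {ω | (ε : ℝ) ≤ (Finset.range (n + 1)).sup'
          nonempty_range_add_one fun k => Real.exp ((2 * A * s) * M k ω l)},
          Real.exp ((2 * A * s) * M n ω l) ∂μ) ≤ ENNReal.ofReal CK := by
      refine ENNReal.ofReal_le_ofReal (le_trans ?_ (hkey l s hs).2)
      exact setIntegral_le_integral ((hkey l s hs).1.integrable n)
        (Filter.Eventually.of_forall fun ω => (Real.exp_pos _).le)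
    have h2 := le_trans h hend
    refine (ENNReal.le_div_iff_mul_le (Or.inl ?_) (Or.inl ENNReal.coe_ne_top)).mpr ?_
    · exact_mod_cast hε
    · rw [mul_comm]
      exact h2
  -- tail bound for t > 1
  have htail : ∀ t : ℝ, 1 < t → μ {a | t ≤ Real.exp (A * T a)}
      ≤ ((2 * d : ℕ) : ℝ≥0∞) * ENNReal.ofReal CK * (ENNReal.ofReal (t ^ 2))⁻¹ := by
    intro t ht
    have ht0 : (0:ℝ) < t := lt_trans zero_lt_one ht
    set ε : ℝ≥0 := Real.toNNReal (t ^ 2) with hεdef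
    have hεc : (ε : ℝ) = t ^ 2 := Real.coe_toNNReal _ (sq_nonneg t)
    have hεne : ε ≠ 0 := by
      rw [hεdef, Ne, Real.toNNReal_eq_zero]
      push_neg
      nlinarith
    set E : Fin d → ℝ → Set Ω := fun l s =>
      {ω | (ε : ℝ) ≤ (Finset.range (n + 1)).sup' nonempty_range_add_one
        fun k => Real.exp ((2 * A * s) * M k ω l)} with hE
    have hsub : {a | t ≤ Real.exp (A * T a)} ⊆ ⋃ l : Fin d, (E l 1 ∪ E l (-1)) := by
      intro ω hω
      have hω' : t ≤ Real.exp (A * T ω) := hω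
      have hlog : Real.log t ≤ A * T ω := by
        have := Real.log_le_log ht0 hω'
        rwa [Real.log_exp] at this
      have hlogpos : 0 < Real.log t / A := div_pos (Real.log_pos ht) hA
      have hT' : Real.log t / A ≤ T ω := by
        rw [div_le_iff₀ hA]
        linarith [mul_comm A (T ω)]
      obtain ⟨k, hk, hkge⟩ := (Finset.le_sup'_iff nonempty_range_add_one).mp
        (show Real.log t / A ≤ (Finset.range (n + 1)).sup' nonempty_range_add_one
          (fun k => ‖M k ω‖) from hT')
      have hex : ∃ j, Real.log t / A ≤ |M k ω j| := by
        by_contra hno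
        push_neg at hno
        have : ‖M k ω‖ < Real.log t / A := by
          refine (pi_norm_lt_iff hlogpos).mpr fun j => ?_
          simpa [Real.norm_eq_abs] using hno j
        linarith
      obtain ⟨j, hj⟩ := hex
      have hexp : ∀ s : ℝ, Real.log t / A ≤ s * M k ω j →
          (ε : ℝ) ≤ Real.exp ((2 * A * s) * M k ω j) := by
        intro s hsle
        have h2 : 2 * Real.log t ≤ (2 * A * s) * M k ω j := by
          rw [div_le_iff₀ hA] at hsle
          nlinarith
        have h3 : Real.exp (2 * Real.log t) ≤ Real.exp ((2 * A * s) * M k ω j) :=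
          Real.exp_le_exp.mpr h2
        rw [hεc]
        refine le_trans (le_of_eq ?_) h3
        rw [two_mul, Real.exp_add, Real.exp_log ht0]
        ring
      refine Set.mem_iUnion.mpr ⟨j, ?_⟩
      rcases le_abs.mp hj with hpos | hneg
      · refine Or.inl ?_
        show (ε : ℝ) ≤ (Finset.range (n + 1)).sup' nonempty_range_add_one
          fun k => Real.exp ((2 * A * 1) * M k ω j)
        refine (Finset.le_sup'_iff nonempty_range_add_one).mpr ⟨k, hk, ?_⟩
        exact hexp 1 (by linarith)
      · refine Or.inr ?_
        show (ε : ℝ) ≤ (Finset.range (n + 1)).sup' nonempty_range_add_one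
          fun k => Real.exp ((2 * A * (-1)) * M k ω j)
        refine (Finset.le_sup'_iff nonempty_range_add_one).mpr ⟨k, hk, ?_⟩
        exact hexp (-1) (by linarith)
    refine le_trans (measure_mono hsub) (le_trans (measure_iUnion_le _) ?_)
    have hbound : ∀ l : Fin d, μ (E l 1 ∪ E l (-1))
        ≤ ENNReal.ofReal CK / ε + ENNReal.ofReal CK / ε := fun l =>
      le_trans (measure_union_le _ _)
        (add_le_add (hmax l 1 (Or.inl rfl) ε hεne) (hmax l (-1) (Or.inr rfl) ε hεne))
    refine le_trans (ENNReal.tsum_le_tsum hbound) (le_of_eq ?_)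
    rw [tsum_fintype, Finset.sum_const]
    have hcoe : (ε : ℝ≥0∞) = ENNReal.ofReal (t ^ 2) := by
      rw [hεdef]; rfl
    rw [← hcoe]
    simp only [Finset.card_univ, Fintype.card_fin, div_eq_mul_inv, nsmul_eq_mul]
    push_cast
    ring
  -- split the domain and integrate
  have hCK0 : (0:ℝ) ≤ CK := by linarith
  have hsplit : ∫⁻ t in Set.Ioi (0:ℝ), μ {a | t ≤ Real.exp (A * T a)}
      = (∫⁻ t in Set.Ioc (0:ℝ) 1, μ {a | t ≤ Real.exp (A * T a)})
        + ∫⁻ t in Set.Ioi (1:ℝ), μ {a | t ≤ Real.exp (A * T a)} := by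
    rw [← Set.Ioc_union_Ioi_eq_Ioi (zero_le_one (α := ℝ)),
      lintegral_union measurableSet_Ioi (Set.Ioc_disjoint_Ioi le_rfl)]
  rw [hsplit]
  have hpiece1 : (∫⁻ t in Set.Ioc (0:ℝ) 1, μ {a | t ≤ Real.exp (A * T a)}) ≤ 1 := by
    calc (∫⁻ t in Set.Ioc (0:ℝ) 1, μ {a | t ≤ Real.exp (A * T a)})
        ≤ ∫⁻ _ in Set.Ioc (0:ℝ) 1, 1 := lintegral_mono fun t => prob_le_one
      _ = 1 := by
        rw [setLIntegral_one, Real.volume_Ioc]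
        norm_num
  have hpiece2 : (∫⁻ t in Set.Ioi (1:ℝ), μ {a | t ≤ Real.exp (A * T a)})
      ≤ ((2 * d : ℕ) : ℝ≥0∞) * ENNReal.ofReal CK := by
    calc (∫⁻ t in Set.Ioi (1:ℝ), μ {a | t ≤ Real.exp (A * T a)})
        ≤ ∫⁻ t in Set.Ioi (1:ℝ),
            ((2 * d : ℕ) : ℝ≥0∞) * ENNReal.ofReal CK * (ENNReal.ofReal (t ^ 2))⁻¹ := by
          refine lintegral_mono_ae ?_
          filter_upwards [ae_restrict_mem measurableSet_Ioi] with t ht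
          exact htail t ht
      _ = ((2 * d : ℕ) : ℝ≥0∞) * ENNReal.ofReal CK
            * ∫⁻ t in Set.Ioi (1:ℝ), (ENNReal.ofReal (t ^ 2))⁻¹ := by
          rw [lintegral_const_mul' _ _
            (ENNReal.mul_ne_top (ENNReal.natCast_ne_top _) ENNReal.ofReal_ne_top)]
      _ = ((2 * d : ℕ) : ℝ≥0∞) * ENNReal.ofReal CK := by
          rw [lintegral_Ioi_inv_sq, mul_one]
  refine le_trans (add_le_add hpiece1 hpiece2) ?_
  have hc2 : ((2 * d : ℕ) : ℝ≥0∞) * ENNReal.ofReal CK = ENNReal.ofReal (2 * d * CK) := by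
    rw [← ENNReal.ofReal_natCast, ← ENNReal.ofReal_mul (by positivity)]
    congr 1
    push_cast
    ring
  rw [hc2, ← ENNReal.ofReal_one, ← ENNReal.ofReal_add zero_le_one (by positivity)]
end

section
/- Let ν₁, ν₂ be probability measures on ℝᵈ with the same first moments and the same second moments (∫ x dν₁ = ∫ x dν₂ and ∫ xⁱxʲ dν₁ = ∫ xⁱxʲ dν₂ for all i,j), and both having finite third moments. Then there exists a probability measure μ on ℝᵈ, supported in (−1/2, 1/2)ᵈ and independent of ν₁, ν₂, and a universal constant C₁ > 0, such that the total variation distance satisfies ρ(ν₁ ∗ μ, ν₂ ∗ μ) ≤ C₁ ( ∫ ‖x‖³ dν₁(x) + ∫ ‖x‖³ dν₂(x) ), where ρ(λ₁, λ₂) = sup_B |λ₁(B) − λ₂(B)| and ∗ denotes convolution. -/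
open MeasureTheory Finset

noncomputable instance clm2NACG {E : Type*} [NormedAddCommGroup E] [NormedSpace ℝ E] :
    NormedAddCommGroup (E →L[ℝ] E →L[ℝ] ℝ) := ContinuousLinearMap.toNormedAddCommGroup

noncomputable instance clm2NS {E : Type*} [NormedAddCommGroup E] [NormedSpace ℝ E] :
    NormedSpace ℝ (E →L[ℝ] E →L[ℝ] ℝ) := ContinuousLinearMap.toNormedSpace

noncomputable instance clm3NACG {E : Type*} [NormedAddCommGroup E] [NormedSpace ℝ E] :
    NormedAddCommGroup (E →L[ℝ] E →L[ℝ] E →L[ℝ] ℝ) := ContinuousLinearMap.toNormedAddCommGroup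

section Aux

variable {E : Type*} [NormedAddCommGroup E] [NormedSpace ℝ E]

/-- Second-order Taylor estimate with uniformly bounded third derivative. -/
theorem taylor2_bound (f : E → ℝ) (hf : ContDiff ℝ 3 f) (M : ℝ)
    (hM : ∀ x, ‖fderiv ℝ (fderiv ℝ (fderiv ℝ f)) x‖ ≤ M) (a v : E) :
    |f (a + v) - (f a + fderiv ℝ f a v + (1/2) * fderiv ℝ (fderiv ℝ f) a v v)|
      ≤ M * ‖v‖ ^ 3 := by
  set f₁ := fderiv ℝ f with hf₁def
  set f₂ := fderiv ℝ f₁ with hf₂def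
  set f₃ := fderiv ℝ f₂ with hf₃def
  have hf1 : ContDiff ℝ 2 f₁ := hf.fderiv_right (by norm_num)
  have hf2 : ContDiff ℝ 1 f₂ := hf1.fderiv_right (by norm_num)
  have hd : ∀ x, HasFDerivAt f (f₁ x) x := fun x =>
    (hf.differentiable (by norm_num) x).hasFDerivAt
  have hd1 : ∀ x, HasFDerivAt f₁ (f₂ x) x := fun x =>
    (hf1.differentiable (by norm_num) x).hasFDerivAt
  have hd2 : ∀ x, HasFDerivAt f₂ (f₃ x) x := fun x =>
    (hf2.differentiable (by norm_num) x).hasFDerivAt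
  have hM0 : 0 ≤ M := le_trans (norm_nonneg _) (hM a)
  -- Step 1 : Lipschitz bound on f₂
  have step1 : ∀ w z : E, ‖f₂ w - f₂ z‖ ≤ M * ‖w - z‖ := by
    intro w z
    refine Convex.norm_image_sub_le_of_norm_hasFDerivWithin_le
      (fun x _ => (hd2 x).hasFDerivWithinAt) (fun x _ => hM x) convex_univ trivial trivial
  -- Step 2 : first order Taylor for f₁
  have step2 : ∀ b : E, ‖f₁ b - f₁ a - f₂ a (b - a)‖ ≤ M * ‖b - a‖ ^ 2 := by
    intro b
    set s : Set E := Metric.closedBall a ‖b - a‖ with hs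
    have hconv : Convex ℝ s := convex_closedBall _ _
    have has : a ∈ s := Metric.mem_closedBall_self (norm_nonneg _)
    have hbs : b ∈ s := by
      simp [hs, Metric.mem_closedBall, dist_eq_norm]
    have key : ∀ x ∈ s, HasFDerivAt (fun w => f₁ w - f₂ a w) (f₂ x - f₂ a) x :=
      fun x _ => (hd1 x).sub (f₂ a).hasFDerivAt
    have bound : ∀ x ∈ s, ‖f₂ x - f₂ a‖ ≤ M * ‖b - a‖ := by
      intro x hx
      calc ‖f₂ x - f₂ a‖ ≤ M * ‖x - a‖ := step1 x a
        _ ≤ M * ‖b - a‖ := by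
            have := Metric.mem_closedBall.1 hx
            rw [dist_eq_norm] at this
            exact mul_le_mul_of_nonneg_left this hM0
    have := Convex.norm_image_sub_le_of_norm_hasFDerivWithin_le
      (fun x hx => (key x hx).hasFDerivWithinAt) bound hconv has hbs
    have heq : (f₁ b - f₂ a b) - (f₁ a - f₂ a a) = f₁ b - f₁ a - f₂ a (b - a) := by
      rw [map_sub]; abel
    rw [heq] at this
    calc ‖f₁ b - f₁ a - f₂ a (b - a)‖ ≤ M * ‖b - a‖ * ‖b - a‖ := this
      _ = M * ‖b - a‖ ^ 2 := by ring
  -- symmetry of the second derivative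
  have hsymm : ∀ v w : E, f₂ a v w = f₂ a w v := fun v w =>
    second_derivative_symmetric hd (hd1 a) v w
  -- Step 3
  set b := a + v with hb
  have hba : b - a = v := by simp [hb]
  set u : E → ℝ := fun w => f w - f₁ a (w - a) - (1/2) * f₂ a (w - a) (w - a) with hu
  have hdu : ∀ w : E, HasFDerivAt u (f₁ w - f₁ a - f₂ a (w - a)) w := by
    intro w
    have h1 : HasFDerivAt (fun w : E => f₁ a (w - a)) (f₁ a) w := by
      have : HasFDerivAt (fun w : E => w - a) (ContinuousLinearMap.id ℝ E) w :=
        (hasFDerivAt_id w).sub_const a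
      have h := (f₁ a).hasFDerivAt.comp w this
      simpa [Function.comp_def] using h
    have hc : HasFDerivAt (fun w : E => f₂ a (w - a)) (f₂ a) w := by
      have : HasFDerivAt (fun w : E => w - a) (ContinuousLinearMap.id ℝ E) w :=
        (hasFDerivAt_id w).sub_const a
      have h := (f₂ a).hasFDerivAt.comp w this
      simpa [Function.comp_def] using h
    have hq : HasFDerivAt (fun w : E => f₂ a (w - a) (w - a))
        ((f₂ a (w - a)).comp (ContinuousLinearMap.id ℝ E)
          + (f₂ a).flip (w - a)) w := by
      have hu' : HasFDerivAt (fun w : E => w - a) (ContinuousLinearMap.id ℝ E) w :=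
        (hasFDerivAt_id w).sub_const a
      exact hc.clm_apply hu'
    have hq' : HasFDerivAt (fun w : E => (1/2 : ℝ) * f₂ a (w - a) (w - a))
        ((1/2 : ℝ) • ((f₂ a (w - a)).comp (ContinuousLinearMap.id ℝ E)
          + (f₂ a).flip (w - a))) w := hq.const_mul _
    have := ((hd w).sub h1).sub hq'
    refine this.congr_fderiv ?_
    apply ContinuousLinearMap.ext
    intro h
    simp only [ContinuousLinearMap.sub_apply, ContinuousLinearMap.smul_apply,
      ContinuousLinearMap.add_apply, ContinuousLinearMap.comp_apply,
      ContinuousLinearMap.id_apply, ContinuousLinearMap.flip_apply, smul_eq_mul]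
    rw [hsymm h (w - a)]
    ring
  set s : Set E := Metric.closedBall a ‖v‖ with hs
  have hconv : Convex ℝ s := convex_closedBall _ _
  have has : a ∈ s := Metric.mem_closedBall_self (norm_nonneg _)
  have hbs : b ∈ s := by simp [hs, Metric.mem_closedBall, dist_eq_norm, hba]
  have bound : ∀ x ∈ s, ‖f₁ x - f₁ a - f₂ a (x - a)‖ ≤ M * ‖v‖ ^ 2 := by
    intro x hx
    refine (step2 x).trans ?_
    have hxa : ‖x - a‖ ≤ ‖v‖ := by
      have := Metric.mem_closedBall.1 hx; rwa [dist_eq_norm] at this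
    have hsq : ‖x - a‖ ^ 2 ≤ ‖v‖ ^ 2 :=
      pow_le_pow_left₀ (norm_nonneg _) hxa 2
    calc M * ‖x - a‖ ^ 2 ≤ M * ‖v‖ ^ 2 := mul_le_mul_of_nonneg_left hsq hM0
      _ = M * ‖v‖ ^ 2 := rfl
  have key := Convex.norm_image_sub_le_of_norm_hasFDerivWithin_le
    (fun x _ => (hdu x).hasFDerivWithinAt) bound hconv has hbs
  have hua : u a = f a := by simp [hu]
  have hub : u b = f (a + v) - f₁ a v - (1/2) * f₂ a v v := by
    simp only [hu, hb, add_sub_cancel_left]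
  have : ‖u b - u a‖ ≤ M * ‖v‖ ^ 2 * ‖b - a‖ := key
  rw [hba, hua, hub] at this
  calc |f (a + v) - (f a + f₁ a v + 1 / 2 * (f₂ a) v v)|
      = ‖f (a + v) - f₁ a v - 1 / 2 * (f₂ a) v v - f a‖ := by
        rw [Real.norm_eq_abs]; ring_nf
    _ ≤ M * ‖v‖ ^ 2 * ‖v‖ := this
    _ = M * ‖v‖ ^ 3 := by ring


/-- coordinate expansion of a continuous linear map on a pi type -/
theorem clm_pi_apply {d : ℕ} {F : Type*} [NormedAddCommGroup F] [NormedSpace ℝ F]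
    (L : (Fin d → ℝ) →L[ℝ] F) (y : Fin d → ℝ) :
    L y = ∑ i, y i • L (fun j => if i = j then (1:ℝ) else 0) := by
  conv_lhs => rw [pi_eq_sum_univ y]
  rw [map_sum]
  simp

theorem le_one_add_cube {t : ℝ} (ht : 0 ≤ t) : t ≤ 1 + t ^ 3 := by
  rcases le_total t 1 with h | h
  · nlinarith [pow_nonneg ht 3]
  · nlinarith [pow_le_pow_right₀ h (show 1 ≤ 3 by norm_num)]

theorem sq_le_one_add_cube {t : ℝ} (ht : 0 ≤ t) : t ^ 2 ≤ 1 + t ^ 3 := by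
  rcases le_total t 1 with h | h
  · nlinarith [pow_nonneg ht 3, sq_nonneg t, mul_le_one₀ h ht h]
  · nlinarith [pow_le_pow_right₀ h (show 2 ≤ 3 by norm_num)]

end Aux

set_option maxHeartbeats 2000000 in
/-- Sakhanenko's smoothing lemma: there exist a probability measure `μ` on `ℝᵈ` supported in
`(−1/2,1/2)ᵈ` and a constant `C₁ > 0` such that, for any two probability measures `ν₁, ν₂`
on `ℝᵈ` with equal first and second moments and finite third absolute moments, the total
variation distance satisfies
`ρ(ν₁ ∗ μ, ν₂ ∗ μ) ≤ C₁ (∫‖x‖³ dν₁ + ∫‖x‖³ dν₂)`. -/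
theorem smoothing_lemma (d : ℕ) :
    ∃ (μ : Measure (Fin d → ℝ)), IsProbabilityMeasure μ ∧
      μ (Set.univ.pi fun _ : Fin d => Set.Ioo (-(1 : ℝ)/2) (1/2))ᶜ = 0 ∧
      ∃ C₁ : ℝ, 0 < C₁ ∧
        ∀ (ν₁ ν₂ : Measure (Fin d → ℝ)),
          IsProbabilityMeasure ν₁ → IsProbabilityMeasure ν₂ →
          Integrable (fun x => ‖x‖ ^ 3) ν₁ → Integrable (fun x => ‖x‖ ^ 3) ν₂ →
          (∀ i : Fin d, ∫ x, x i ∂ν₁ = ∫ x, x i ∂ν₂) →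
          (∀ i j : Fin d, ∫ x, x i * x j ∂ν₁ = ∫ x, x i * x j ∂ν₂) →
          ∀ B : Set (Fin d → ℝ), MeasurableSet B →
            |((ν₁.conv μ) B).toReal - ((ν₂.conv μ) B).toReal|
              ≤ C₁ * ((∫ x, ‖x‖ ^ 3 ∂ν₁) + ∫ x, ‖x‖ ^ 3 ∂ν₂) := by
  classical
  set E := Fin d → ℝ with hE
  -- the bump function
  set φ : ContDiffBump (0 : E) := ⟨1/4, 1/2, by norm_num, by norm_num⟩ with hφ
  set f : E → ℝ := φ.normed volume with hfdef
  have f_smooth : ContDiff ℝ 3 f := by exact_mod_cast φ.contDiff_normed (n := 3)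
  have f_nonneg : ∀ x, 0 ≤ f x := φ.nonneg_normed
  have f_cont : Continuous f := f_smooth.continuous
  have f_supp : Function.support f = Metric.ball (0 : E) (1/2) := φ.support_normed_eq
  have f_cpt : HasCompactSupport f := φ.hasCompactSupport_normed
  have f_int : Integrable f volume := f_cont.integrable_of_hasCompactSupport f_cpt
  have f_integral : ∫ x, f x = 1 := φ.integral_normed
  -- the smoothing measure
  set μ : Measure E := volume.withDensity (fun x => ENNReal.ofReal (f x)) with hμ
  have hμ_apply : ∀ s : Set E, MeasurableSet s → μ s = ∫⁻ x in s, ENNReal.ofReal (f x) := by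
    intro s hs; rw [hμ, withDensity_apply _ hs]
  have hμ_prob : IsProbabilityMeasure μ := by
    constructor
    rw [hμ_apply _ MeasurableSet.univ, Measure.restrict_univ,
      ← ofReal_integral_eq_lintegral_ofReal f_int (Filter.Eventually.of_forall f_nonneg),
      f_integral]
    simp
  haveI := hμ_prob
  refine ⟨μ, hμ_prob, ?_, ?_⟩
  · -- support condition
    have hsub : (Set.univ.pi fun _ : Fin d => Set.Ioo (-(1 : ℝ)/2) (1/2))ᶜ
        ⊆ (Metric.ball (0 : E) (1/2))ᶜ := by
      apply Set.compl_subset_compl.2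
      intro x hx
      rw [Set.mem_pi]
      intro i _
      have h1 : ‖x i‖ ≤ ‖x‖ := norm_le_pi_norm x i
      have h2 : ‖x‖ < 1/2 := by simpa [dist_eq_norm] using hx
      have := (abs_lt.1 (lt_of_le_of_lt (le_of_eq (Real.norm_eq_abs _).symm) (h1.trans_lt h2)))
      constructor <;> [linarith [this.1]; linarith [this.2]]
    refine measure_mono_null hsub ?_
    rw [hμ_apply _ (Metric.isOpen_ball.measurableSet.compl)]
    have hzero : ∀ x, x ∈ (Metric.ball (0:E) (1/2))ᶜ → ENNReal.ofReal (f x) = (fun _ => (0:ENNReal)) x := by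
      intro x hx
      have : f x = 0 := by
        by_contra h
        exact hx (f_supp ▸ Function.mem_support.2 h)
      simp [this]
    rw [setLIntegral_congr_fun Metric.isOpen_ball.measurableSet.compl
      hzero]
    simp
  -- derivatives of f
  set f₁ := fderiv ℝ f with hf₁def
  set f₂ := fderiv ℝ f₁ with hf₂def
  set f₃ := fderiv ℝ f₂ with hf₃def
  have hf1 : ContDiff ℝ 2 f₁ := f_smooth.fderiv_right (by norm_num)
  have hf2 : ContDiff ℝ 1 f₂ := hf1.fderiv_right (by norm_num)
  have hf1c : Continuous f₁ := hf1.continuous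
  have hf2c : Continuous f₂ := hf2.continuous
  have hf3c : Continuous f₃ := hf2.continuous_fderiv (by norm_num)
  have hf1cpt : HasCompactSupport f₁ := f_cpt.fderiv ℝ
  have hf2cpt : HasCompactSupport f₂ := hf1cpt.fderiv ℝ
  have hf3cpt : HasCompactSupport f₃ := hf2cpt.fderiv ℝ
  obtain ⟨M, hM⟩ := hf3c.bounded_above_of_compact_support hf3cpt
  have hM0 : 0 ≤ M := le_trans (norm_nonneg _) (hM 0)
  set K : Set E := tsupport f with hK
  have hKcpt : IsCompact K := f_cpt
  have hKmeas : MeasurableSet K := hKcpt.isClosed.measurableSet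
  have hKfin : volume K < ⊤ := hKcpt.measure_lt_top
  -- vanishing outside K
  have hf0 : ∀ x ∉ K, f x = 0 := fun x hx => image_eq_zero_of_notMem_tsupport hx
  have hf10 : ∀ x ∉ K, f₁ x = 0 := by
    intro x hx
    by_contra h
    exact hx (support_fderiv_subset ℝ (Function.mem_support.2 h))
  have hf20 : ∀ x ∉ K, f₂ x = 0 := by
    intro x hx
    by_contra h
    have h1 : x ∈ tsupport f₁ := support_fderiv_subset ℝ (Function.mem_support.2 h)
    have h2 : tsupport f₁ ⊆ K := by
      rw [hK]
      exact closure_minimal (fun z hz => by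
        by_contra hzK
        exact (Function.mem_support.1 hz) (hf10 z hzK)) isClosed_closure
    exact hx (h2 h1)
  -- the constant
  set C : ℝ := 2 * M * (volume K).toReal + 1 with hC
  have hC0 : 0 < C := by positivity
  refine ⟨C, hC0, ?_⟩
  intro ν₁ ν₂ hν₁ hν₂ h3ν₁ h3ν₂ hmom1 hmom2 B hB
  haveI := hν₁
  haveI := hν₂
  -- the slice function
  set S : Set (E × E) := (fun p : E × E => p.1 + p.2) ⁻¹' B with hSdef
  have hSmeas : MeasurableSet S := measurable_add hB
  set Φ : E → ENNReal := fun y => μ ((fun z => y + z) ⁻¹' B) with hΦ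
  have hΦmeas : Measurable Φ := measurable_measure_prodMk_left hSmeas
  have hΦle : ∀ y, Φ y ≤ 1 := fun y => prob_le_one
  have hconv : ∀ (ν : Measure E) [SFinite ν], (ν.conv μ) B = ∫⁻ y, Φ y ∂ν := by
    intro ν _
    rw [Measure.conv, Measure.map_apply measurable_add hB, Measure.prod_apply hSmeas]
    rfl
  set H : E → ℝ := fun y => ∫ x in B, f (x - y) with hHdef
  -- translates of f are integrable
  have f_shift_cont : ∀ y : E, Continuous fun x : E => f (x - y) := fun y =>
    f_cont.comp (continuous_id.sub continuous_const)
  have f_shift_supp : ∀ y x, x ∉ (fun x : E => -y + x) ⁻¹' K → f (x - y) = 0 := by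
    intro y x hx
    apply hf0
    rwa [Set.mem_preimage, neg_add_eq_sub] at hx
  have hTcpt : ∀ y : E, IsCompact ((fun x : E => -y + x) ⁻¹' K) := fun y =>
    (Homeomorph.addLeft (-y)).isCompact_preimage.2 hKcpt
  have hTmeas : ∀ y : E, MeasurableSet ((fun x : E => -y + x) ⁻¹' K) := fun y =>
    (measurable_const_add (-y)) hKmeas
  have hTvol : ∀ y : E, volume ((fun x : E => -y + x) ⁻¹' K) = volume K := fun y =>
    measure_preimage_add volume (-y) K
  have f_shift_int : ∀ y : E, Integrable (fun x => f (x - y)) volume := fun y =>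
    (f_shift_cont y).integrable_of_hasCompactSupport
      (HasCompactSupport.intro (hTcpt y) (f_shift_supp y))
  -- relation between Φ and H
  have hofReal : ∀ y, ENNReal.ofReal (H y) = Φ y := by
    intro y
    have hpre : MeasurableSet ((fun z : E => y + z) ⁻¹' B) := (measurable_const_add y) hB
    rw [hΦ]
    simp only
    rw [hμ_apply _ hpre,
      ← ofReal_integral_eq_lintegral_ofReal f_int.integrableOn
        (Filter.Eventually.of_forall fun x => f_nonneg x)]
    congr 1
    have hind : ((fun z : E => y + z) ⁻¹' B).indicator f
        = fun z => (B.indicator (fun x => f (x - y))) (y + z) := by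
      funext z
      by_cases hz : y + z ∈ B
      · rw [Set.indicator_of_mem hz, Set.indicator_of_mem (by exact hz), add_sub_cancel_left]
      · rw [Set.indicator_of_notMem hz, Set.indicator_of_notMem (by exact hz)]
    rw [← integral_indicator hpre, hind, integral_add_left_eq_self, integral_indicator hB]
  have hHnonneg : ∀ y, 0 ≤ H y := fun y =>
    setIntegral_nonneg hB fun x _ => f_nonneg _
  have hHtoReal : H = fun y => (Φ y).toReal := by
    funext y
    rw [← hofReal y, ENNReal.toReal_ofReal (hHnonneg y)]
  have hHmeas : Measurable H := by rw [hHtoReal]; exact hΦmeas.ennreal_toReal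
  have hHle1 : ∀ y, H y ≤ 1 := by
    intro y
    rw [hHtoReal]
    simpa using ENNReal.toReal_mono (by simp) (hΦle y)
  have hHint : ∀ (ν : Measure E) [IsProbabilityMeasure ν], Integrable H ν := by
    intro ν _
    refine Integrable.mono' (integrable_const (1:ℝ)) hHmeas.aestronglyMeasurable
      (Filter.Eventually.of_forall fun y => ?_)
    rw [Real.norm_eq_abs, abs_of_nonneg (hHnonneg y)]
    exact hHle1 y
  have hconv_toReal : ∀ (ν : Measure E) [IsProbabilityMeasure ν],
      ((ν.conv μ) B).toReal = ∫ y, H y ∂ν := by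
    intro ν _
    rw [hconv ν]
    have h1 : ∫⁻ y, Φ y ∂ν = ∫⁻ y, ENNReal.ofReal (H y) ∂ν :=
      lintegral_congr fun y => (hofReal y).symm
    rw [h1, ← ofReal_integral_eq_lintegral_ofReal (hHint ν)
      (Filter.Eventually.of_forall hHnonneg),
      ENNReal.toReal_ofReal (integral_nonneg hHnonneg)]
  -- moment integrability
  have hmono : ∀ (ν : Measure E) [IsProbabilityMeasure ν],
      Integrable (fun x : E => ‖x‖ ^ 3) ν →
      (∀ i, Integrable (fun y : E => y i) ν) ∧
      (∀ i j, Integrable (fun y : E => y i * y j) ν) := by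
    intro ν _ h3
    have hg : Integrable (fun y : E => 1 + ‖y‖ ^ 3) ν := (integrable_const 1).add h3
    constructor
    · intro i
      refine Integrable.mono' hg ((continuous_apply i).aestronglyMeasurable)
        (Filter.Eventually.of_forall fun y => ?_)
      calc ‖y i‖ ≤ ‖y‖ := norm_le_pi_norm y i
        _ ≤ 1 + ‖y‖ ^ 3 := le_one_add_cube (norm_nonneg y)
    · intro i j
      refine Integrable.mono' hg (((continuous_apply i).mul (continuous_apply j)).aestronglyMeasurable)
        (Filter.Eventually.of_forall fun y => ?_)
      calc ‖y i * y j‖ = ‖y i‖ * ‖y j‖ := norm_mul _ _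
        _ ≤ ‖y‖ * ‖y‖ := mul_le_mul (norm_le_pi_norm y i) (norm_le_pi_norm y j)
            (norm_nonneg _) (norm_nonneg _)
        _ = ‖y‖ ^ 2 := (sq ‖y‖).symm
        _ ≤ 1 + ‖y‖ ^ 3 := sq_le_one_add_cube (norm_nonneg y)
  obtain ⟨hm1ν₁, hm2ν₁⟩ := hmono ν₁ h3ν₁
  obtain ⟨hm1ν₂, hm2ν₂⟩ := hmono ν₂ h3ν₂
  -- coefficient functions
  set e : Fin d → E := fun i j => if i = j then (1:ℝ) else 0 with he
  set F1 : Fin d → E → ℝ := fun i x => f₁ x (e i) with hF1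
  set F2 : Fin d → Fin d → E → ℝ := fun i j x => f₂ x (e i) (e j) with hF2
  have hF1int : ∀ i, Integrable (F1 i) volume := by
    intro i
    refine (hf1c.clm_apply continuous_const).integrable_of_hasCompactSupport
      (HasCompactSupport.intro hKcpt fun x hx => ?_)
    show f₁ x (e i) = 0
    rw [hf10 x hx]; simp
  have hF2int : ∀ i j, Integrable (F2 i j) volume := by
    intro i j
    refine ((hf2c.clm_apply continuous_const).clm_apply continuous_const).integrable_of_hasCompactSupport
      (HasCompactSupport.intro hKcpt fun x hx => ?_)
    show f₂ x (e i) (e j) = 0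
    rw [hf20 x hx]; simp
  set A₀ : ℝ := ∫ x in B, f x with hA₀
  set aa : Fin d → ℝ := fun i => ∫ x in B, F1 i x with haa
  set bb : Fin d → Fin d → ℝ := fun i j => ∫ x in B, F2 i j x with hbb
  set Q : E → ℝ := fun y =>
    A₀ - (∑ i, y i * aa i) + (1/2) * ∑ i, ∑ j, (y i * y j) * bb i j with hQdef
  -- expansion in coordinates
  have hexp1 : ∀ (x y : E), f₁ x y = ∑ i, y i * F1 i x := by
    intro x y
    rw [clm_pi_apply (f₁ x) y]
    exact Finset.sum_congr rfl fun i _ => by rw [smul_eq_mul]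
  have hexp2 : ∀ (x y : E), f₂ x y y = ∑ i, ∑ j, (y i * y j) * F2 i j x := by
    intro x y
    have h1 : f₂ x y = ∑ i, y i • (f₂ x) (e i) := clm_pi_apply (f₂ x) y
    calc f₂ x y y = (∑ i, y i • (f₂ x) (e i)) y := by rw [← h1]
      _ = ∑ i, y i * ((f₂ x) (e i) y) := by
          rw [ContinuousLinearMap.sum_apply]
          exact Finset.sum_congr rfl fun i _ => by
            rw [ContinuousLinearMap.smul_apply, smul_eq_mul]
      _ = ∑ i, ∑ j, (y i * y j) * F2 i j x := by
          refine Finset.sum_congr rfl fun i _ => ?_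
          rw [clm_pi_apply ((f₂ x) (e i)) y, Finset.mul_sum]
          exact Finset.sum_congr rfl fun j _ => by rw [smul_eq_mul]; ring_nf; rfl
  -- the polynomial part
  set P : E → E → ℝ := fun x y => f x - f₁ x y + (1/2) * f₂ x y y with hPdef
  have hP1int : ∀ y : E, Integrable (fun x => f₁ x y) volume := by
    intro y
    refine (hf1c.clm_apply continuous_const).integrable_of_hasCompactSupport
      (HasCompactSupport.intro hKcpt fun x hx => ?_)
    rw [hf10 x hx]; simp
  have hP2int : ∀ y : E, Integrable (fun x => f₂ x y y) volume := by
    intro y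
    refine ((hf2c.clm_apply continuous_const).clm_apply continuous_const).integrable_of_hasCompactSupport
      (HasCompactSupport.intro hKcpt fun x hx => ?_)
    rw [hf20 x hx]; simp
  have hPint : ∀ y : E, Integrable (fun x => P x y) volume := by
    intro y
    exact (f_int.sub (hP1int y)).add ((hP2int y).const_mul _)
  have hQB : ∀ y : E, ∫ x in B, P x y = Q y := by
    intro y
    have e1 : ∫ x in B, (fun x => f₁ x y) x = ∑ i, y i * aa i := by
      have : (fun x : E => f₁ x y) = fun x => ∑ i, y i * F1 i x :=
        funext fun x => hexp1 x y
      rw [this, integral_finset_sum _ (fun i _ => ((hF1int i).const_mul (y i)).integrableOn)]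
      exact Finset.sum_congr rfl fun i _ => integral_const_mul _ _
    have e2 : ∫ x in B, (fun x => f₂ x y y) x = ∑ i, ∑ j, (y i * y j) * bb i j := by
      have : (fun x : E => f₂ x y y) = fun x => ∑ i, ∑ j, (y i * y j) * F2 i j x :=
        funext fun x => hexp2 x y
      rw [this, integral_finset_sum _ (fun i _ =>
        (integrable_finset_sum _ fun j _ => (hF2int i j).const_mul ((y i * y j))).integrableOn)]
      refine Finset.sum_congr rfl fun i _ => ?_
      rw [integral_finset_sum _ (fun j _ => ((hF2int i j).const_mul ((y i * y j))).integrableOn)]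
      exact Finset.sum_congr rfl fun j _ => integral_const_mul _ _
    calc ∫ x in B, P x y
        = (∫ x in B, f x) - (∫ x in B, (fun x => f₁ x y) x)
          + (1/2) * ∫ x in B, (fun x => f₂ x y y) x := by
          simp only [hPdef]
          have i1 : Integrable (fun x : E => f x - f₁ x y) (volume.restrict B) :=
            (f_int.integrableOn).sub (hP1int y).integrableOn
          have i2 : Integrable (fun x : E => (1/2) * f₂ x y y) (volume.restrict B) :=
            ((hP2int y).const_mul _).integrableOn
          have i3 : Integrable f (volume.restrict B) := f_int.integrableOn
          have i4 : Integrable (fun x : E => f₁ x y) (volume.restrict B) :=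
            (hP1int y).integrableOn
          rw [integral_add i1 i2, integral_sub i3 i4, integral_const_mul]
      _ = Q y := by rw [e1, e2]
  -- integral of Q against a measure with given moments
  have hQint : ∀ (ν : Measure E) [IsProbabilityMeasure ν],
      (∀ i, Integrable (fun y : E => y i) ν) →
      (∀ i j, Integrable (fun y : E => y i * y j) ν) → Integrable Q ν := by
    intro ν _ hm1 hm2
    exact ((integrable_const A₀).sub
        (integrable_finset_sum _ fun i _ => (hm1 i).mul_const _)).add
      ((integrable_finset_sum _ fun i _ =>
        integrable_finset_sum _ fun j _ => (hm2 i j).mul_const _).const_mul _)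
  have hQval : ∀ (ν : Measure E) [IsProbabilityMeasure ν],
      (∀ i, Integrable (fun y : E => y i) ν) →
      (∀ i j, Integrable (fun y : E => y i * y j) ν) →
      ∫ y, Q y ∂ν = A₀ - (∑ i, (∫ y, y i ∂ν) * aa i)
        + (1/2) * ∑ i, ∑ j, (∫ y, y i * y j ∂ν) * bb i j := by
    intro ν _ hm1 hm2
    simp only [hQdef]
    have j1 : Integrable (fun y : E => A₀ - ∑ i, y i * aa i) ν :=
      (integrable_const A₀).sub
        (integrable_finset_sum _ fun i _ => (hm1 i).mul_const _)
    have j2 : Integrable (fun y : E => (1/2) * ∑ i, ∑ j, (y i * y j) * bb i j) ν :=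
      (integrable_finset_sum _ fun i _ =>
        integrable_finset_sum _ fun j _ => (hm2 i j).mul_const _).const_mul _
    have j3 : Integrable (fun y : E => ∑ i, y i * aa i) ν :=
      integrable_finset_sum _ fun i _ => (hm1 i).mul_const _
    have j4 : Integrable (fun y : E => ∑ i, ∑ j, (y i * y j) * bb i j) ν :=
      integrable_finset_sum _ fun i _ =>
        integrable_finset_sum _ fun j _ => (hm2 i j).mul_const _
    rw [integral_add j1 j2, integral_sub (integrable_const A₀) j3,
      integral_const, integral_const_mul,
      integral_finset_sum _ (fun i _ => (hm1 i).mul_const _),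
      integral_finset_sum _ (fun i _ =>
        integrable_finset_sum _ fun j _ => (hm2 i j).mul_const _)]
    simp only [probReal_univ, measure_univ, ENNReal.toReal_one, smul_eq_mul, one_mul]
    congr 1
    · congr 1
      exact Finset.sum_congr rfl fun i _ => integral_mul_const _ _
    · congr 1
      refine Finset.sum_congr rfl fun i _ => ?_
      rw [integral_finset_sum _ (fun j _ => (hm2 i j).mul_const _)]
      exact Finset.sum_congr rfl fun j _ => integral_mul_const _ _
  have hQeq : ∫ y, Q y ∂ν₁ = ∫ y, Q y ∂ν₂ := by
    rw [hQval ν₁ hm1ν₁ hm2ν₁, hQval ν₂ hm1ν₂ hm2ν₂]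
    congr 1
    · congr 1
      exact Finset.sum_congr rfl fun i _ => by rw [hmom1 i]
    · congr 1
      exact Finset.sum_congr rfl fun i _ => Finset.sum_congr rfl fun j _ => by
        rw [hmom2 i j]
  -- the remainder
  set Rm : E → E → ℝ := fun x y => f (x - y) - P x y with hRmdef
  have hTay : ∀ (x y : E), |Rm x y| ≤ M * ‖y‖ ^ 3 := by
    intro x y
    have h := taylor2_bound f f_smooth M hM x (-y)
    rw [← hf₁def, ← hf₂def] at h
    have heq : Rm x y = f (x + -y) - (f x + f₁ x (-y) + (1/2) * f₂ x (-y) (-y)) := by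
      rw [hRmdef, hPdef]
      rw [show f (x + -y) = f (x - y) from congrArg f (sub_eq_add_neg x y).symm]
      simp only [ContinuousLinearMap.map_neg, ContinuousLinearMap.neg_apply, neg_neg, ← sub_eq_add_neg]
      try ring
    rw [heq]
    calc |f (x + -y) - (f x + f₁ x (-y) + (1/2) * f₂ x (-y) (-y))| ≤ M * ‖-y‖ ^ 3 := h
      _ = M * ‖y‖ ^ 3 := by rw [norm_neg]
  have hRzero : ∀ (y x : E), x ∉ K ∪ (fun x : E => -y + x) ⁻¹' K → Rm x y = 0 := by
    intro y x hx
    rw [Set.mem_union, not_or] at hx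
    obtain ⟨hx1, hx2⟩ := hx
    have h1 : f (x - y) = 0 := f_shift_supp y x hx2
    have h2 : f x = 0 := hf0 x hx1
    have h3 : f₁ x = 0 := hf10 x hx1
    have h4 : f₂ x = 0 := hf20 x hx1
    rw [hRmdef, hPdef]
    simp only [h1, h2, h3, h4]
    simp
  have hRcont : ∀ y : E, Continuous fun x => Rm x y := by
    intro y
    refine (f_shift_cont y).sub ?_
    exact (f_cont.sub (hf1c.clm_apply continuous_const)).add
      (continuous_const.mul ((hf2c.clm_apply continuous_const).clm_apply continuous_const))
  have hRint : ∀ y : E, Integrable (fun x => Rm x y) volume := by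
    intro y
    exact (hRcont y).integrable_of_hasCompactSupport
      (HasCompactSupport.intro (hKcpt.union (hTcpt y)) (hRzero y))
  -- remainder bound
  have hWkey : ∀ y : E, |∫ x in B, Rm x y| ≤ 2 * M * (volume K).toReal * ‖y‖ ^ 3 := by
    intro y
    set U : Set E := K ∪ (fun x : E => -y + x) ⁻¹' K with hU
    have hUmeas : MeasurableSet U := hKmeas.union (hTmeas y)
    have hUvol : volume U ≤ 2 * volume K := by
      refine (measure_union_le _ _).trans ?_
      rw [hTvol y, two_mul]
    have h2K : (2 : ENNReal) * volume K ≠ ⊤ := ENNReal.mul_ne_top (by simp) hKfin.ne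
    have hUfin : volume U < ⊤ := lt_of_le_of_lt hUvol (lt_top_iff_ne_top.2 h2K)
    have h1 : |∫ x in B, Rm x y| ≤ ∫ x in B, |Rm x y| := by
      simpa [Real.norm_eq_abs] using
        norm_integral_le_integral_norm (μ := volume.restrict B) (fun x => Rm x y)
    have h2 : ∫ x in B, |Rm x y| ≤ ∫ x, |Rm x y| :=
      setIntegral_le_integral (hRint y).abs
        (Filter.Eventually.of_forall fun x => abs_nonneg _)
    have h3 : ∫ x, |Rm x y| = ∫ x in U, |Rm x y| := by
      refine (setIntegral_eq_integral_of_forall_compl_eq_zero fun x hx => ?_).symm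
      rw [hRzero y x hx, abs_zero]
    have h4 : ∫ x in U, |Rm x y| ≤ ∫ x in U, M * ‖y‖ ^ 3 := by
      refine setIntegral_mono_on ((hRint y).abs.integrableOn) ?_ hUmeas
        (fun x _ => hTay x y)
      exact integrableOn_const hUfin.ne
    have h5 : ∫ x in U, (M * ‖y‖ ^ 3 : ℝ) = (volume U).toReal * (M * ‖y‖ ^ 3) := by
      rw [setIntegral_const, smul_eq_mul, measureReal_def]
    have h6 : (volume U).toReal ≤ 2 * (volume K).toReal := by
      have := ENNReal.toReal_mono h2K hUvol
      rwa [ENNReal.toReal_mul, ENNReal.toReal_ofNat] at this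
    calc |∫ x in B, Rm x y| ≤ ∫ x in U, M * ‖y‖ ^ 3 := (h1.trans h2).trans (h3 ▸ h4)
      _ = (volume U).toReal * (M * ‖y‖ ^ 3) := h5
      _ ≤ (2 * (volume K).toReal) * (M * ‖y‖ ^ 3) := by
          refine mul_le_mul_of_nonneg_right h6 (by positivity)
      _ = 2 * M * (volume K).toReal * ‖y‖ ^ 3 := by ring
  -- the function W
  set W : E → ℝ := fun y => H y - Q y with hWdef
  have hHQW : ∀ y, W y = ∫ x in B, Rm x y := by
    intro y
    rw [hWdef]
    simp only
    rw [← hQB y, hHdef]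
    simp only
    rw [← integral_sub (f_shift_int y).integrableOn (hPint y).integrableOn]
    try rfl
  have hWbound : ∀ y, |W y| ≤ 2 * M * (volume K).toReal * ‖y‖ ^ 3 := by
    intro y
    rw [hHQW y]
    exact hWkey y
  have hQcontmeas : Measurable Q := by
    rw [hQdef]
    refine Measurable.add (Measurable.sub measurable_const ?_) ?_
    · exact Finset.measurable_sum _ fun i _ => (measurable_pi_apply i).mul_const _
    · exact ((Finset.measurable_sum _ fun i _ => Finset.measurable_sum _ fun j _ =>
        ((measurable_pi_apply i).mul (measurable_pi_apply j)).mul_const _)).const_mul _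
  have hWmeas : Measurable W := hHmeas.sub hQcontmeas
  have hWint : ∀ (ν : Measure E) [IsProbabilityMeasure ν],
      Integrable (fun x : E => ‖x‖ ^ 3) ν → Integrable W ν := by
    intro ν _ h3
    refine Integrable.mono' (h3.const_mul (2 * M * (volume K).toReal))
      hWmeas.aestronglyMeasurable (Filter.Eventually.of_forall fun y => ?_)
    rw [Real.norm_eq_abs]
    exact hWbound y
  -- assembling
  have hsplit : ∀ (ν : Measure E) [IsProbabilityMeasure ν],
      (∀ i, Integrable (fun y : E => y i) ν) →
      (∀ i j, Integrable (fun y : E => y i * y j) ν) →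
      Integrable (fun x : E => ‖x‖ ^ 3) ν →
      ∫ y, H y ∂ν = (∫ y, Q y ∂ν) + ∫ y, W y ∂ν := by
    intro ν _ hm1 hm2 h3
    rw [← integral_add (hQint ν hm1 hm2) (hWint ν h3)]
    refine integral_congr_ae (Filter.Eventually.of_forall fun y => ?_)
    rw [hWdef]
    simp
  have habs : ∀ (ν : Measure E) [IsProbabilityMeasure ν]
      (h3 : Integrable (fun x : E => ‖x‖ ^ 3) ν),
      |∫ y, W y ∂ν| ≤ 2 * M * (volume K).toReal * ∫ y, ‖y‖ ^ 3 ∂ν := by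
    intro ν _ h3
    calc |∫ y, W y ∂ν| ≤ ∫ y, |W y| ∂ν := by
          simpa [Real.norm_eq_abs] using norm_integral_le_integral_norm (μ := ν) W
      _ ≤ ∫ y, 2 * M * (volume K).toReal * ‖y‖ ^ 3 ∂ν := by
          refine integral_mono (hWint ν h3).abs (h3.const_mul _) fun y => hWbound y
      _ = 2 * M * (volume K).toReal * ∫ y, ‖y‖ ^ 3 ∂ν := integral_const_mul _ _
  have hm3pos₁ : 0 ≤ ∫ x, ‖x‖ ^ 3 ∂ν₁ := integral_nonneg fun x => by positivity
  have hm3pos₂ : 0 ≤ ∫ x, ‖x‖ ^ 3 ∂ν₂ := integral_nonneg fun x => by positivity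
  rw [hconv_toReal ν₁, hconv_toReal ν₂,
    hsplit ν₁ hm1ν₁ hm2ν₁ h3ν₁, hsplit ν₂ hm1ν₂ hm2ν₂ h3ν₂, hQeq]
  have hdiff : A₀ - A₀ = 0 := sub_self A₀
  calc |(∫ y, Q y ∂ν₂) + (∫ y, W y ∂ν₁) - ((∫ y, Q y ∂ν₂) + ∫ y, W y ∂ν₂)|
      = |(∫ y, W y ∂ν₁) - ∫ y, W y ∂ν₂| := by
        have : (∫ y, Q y ∂ν₂) + (∫ y, W y ∂ν₁) - ((∫ y, Q y ∂ν₂) + ∫ y, W y ∂ν₂)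
            = (∫ y, W y ∂ν₁) - ∫ y, W y ∂ν₂ := by ring
        rw [this]
    _ ≤ |∫ y, W y ∂ν₁| + |∫ y, W y ∂ν₂| := abs_sub _ _
    _ ≤ 2 * M * (volume K).toReal * (∫ y, ‖y‖ ^ 3 ∂ν₁)
        + 2 * M * (volume K).toReal * ∫ y, ‖y‖ ^ 3 ∂ν₂ :=
          add_le_add (habs ν₁ h3ν₁) (habs ν₂ h3ν₂)
    _ = 2 * M * (volume K).toReal * ((∫ y, ‖y‖ ^ 3 ∂ν₁) + ∫ y, ‖y‖ ^ 3 ∂ν₂) := by ring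
    _ ≤ C * ((∫ y, ‖y‖ ^ 3 ∂ν₁) + ∫ y, ‖y‖ ^ 3 ∂ν₂) := by
        refine mul_le_mul_of_nonneg_right ?_ (by linarith)
        rw [hC]
        linarith
end
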